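/- arXiv:2106.10665 — 6 statements merged into one kernel-verified Lean document; each statement's English description precedes it below -/
import Mathlib

section
/- Let C be a d×d real positive definite matrix. Suppose x₁ is a unit-norm eigenvector of C with Cx₁ = βx₁, and x₂ ∈ ℝ^d satisfies Cx₂ = (x₁ᵀCx₂)x₁ + (x₂ᵀCx₂)x₂. Then either x₂ = 0, or x₂ is a unit-norm eigenvector of C with x₁ᵀx₂ = 0. -/
/-!
Pairing the fixed-point equation with `x₁` gives `(x₂ᵀCx₂)(x₁ᵀx₂) = 0`, and `x₂ᵀCx₂ > 0` for
`x₂ ≠ 0`, so `x₁ ⟂ x₂`. By symmetry of `C`, `x₁ᵀCx₂ = β x₁ᵀx₂ = 0`, so the equation collapses to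
`Cx₂ = (x₂ᵀCx₂) x₂`; pairing this with `x₂` forces `‖x₂‖² = 1`.
-/

open Matrix

namespace Matrix

variable {n R : Type*} [Fintype n]

theorem IsSymm.dotProduct_mulVec_of_mulVec_eq_smul [CommSemiring R] {C : Matrix n n R}
    (hC : C.IsSymm) {u : n → R} {β : R} (hu : C *ᵥ u = β • u) (x : n → R) :
    u ⬝ᵥ C *ᵥ x = β * (u ⬝ᵥ x) := by
  rw [dotProduct_mulVec, ← mulVec_transpose, hC.eq, hu, smul_dotProduct, smul_eq_mul]

theorem mul_dotProduct_eq_zero_of_eq_add_smul [CommRing R] {u w x : n → R} {μ : R}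
    (hu : u ⬝ᵥ u = 1) (hw : w = (u ⬝ᵥ w) • u + μ • x) : μ * (u ⬝ᵥ x) = 0 := by
  have h := congrArg (u ⬝ᵥ ·) hw
  simp only [dotProduct_add, dotProduct_smul, smul_eq_mul, hu, mul_one] at h
  linear_combination -h

theorem dotProduct_self_eq_one_of_eq_smul [Field R] {w x : n → R}
    (hw : w = (x ⬝ᵥ w) • x) (hne : x ⬝ᵥ w ≠ 0) : x ⬝ᵥ x = 1 := by
  have h := congrArg (x ⬝ᵥ ·) hw
  simp only [dotProduct_smul, smul_eq_mul] at h
  exact mul_left_cancel₀ hne (by linear_combination -h)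

end Matrix

theorem sanger_second_column (d : ℕ) (C : Matrix (Fin d) (Fin d) ℝ)
    (hC : C.PosDef) (x₁ x₂ : Fin d → ℝ) (β : ℝ)
    (hx₁norm : x₁ ⬝ᵥ x₁ = 1) (hx₁eig : C.mulVec x₁ = β • x₁)
    (hfix : C.mulVec x₂ = (x₁ ⬝ᵥ C.mulVec x₂) • x₁ + (x₂ ⬝ᵥ C.mulVec x₂) • x₂) :
    x₂ = 0 ∨ (x₂ ⬝ᵥ x₂ = 1 ∧ (∃ l : ℝ, C.mulVec x₂ = l • x₂) ∧ x₁ ⬝ᵥ x₂ = 0) := by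
  refine or_iff_not_imp_left.2 fun hx₂ => ?_
  have hμ : x₂ ⬝ᵥ C *ᵥ x₂ ≠ 0 := (hC.dotProduct_mulVec_pos hx₂).ne'
  have horth : x₁ ⬝ᵥ x₂ = 0 :=
    (mul_eq_zero.1 (mul_dotProduct_eq_zero_of_eq_add_smul hx₁norm hfix)).resolve_left hμ
  have hCsymm : C.IsSymm := isHermitian_iff_isSymm.1 hC.isHermitian
  have hcross : x₁ ⬝ᵥ C *ᵥ x₂ = 0 := by
    rw [hCsymm.dotProduct_mulVec_of_mulVec_eq_smul hx₁eig, horth, mul_zero]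
  have heig : C *ᵥ x₂ = (x₂ ⬝ᵥ C *ᵥ x₂) • x₂ := by
    rwa [hcross, zero_smul, zero_add] at hfix
  exact ⟨dotProduct_self_eq_one_of_eq_smul heig hμ, ⟨_, heig⟩, horth⟩
end

section
/- Let C be a d×d real positive definite matrix and let 𝒰(A) denote the upper-triangular part of a square matrix A (entries below the diagonal set to zero). If X ∈ ℝ^{d×m} satisfies CX = X·𝒰(XᵀCX), then XᵀX is a diagonal matrix whose diagonal entries are each 0 or 1, and every nonzero column of X is a unit-norm eigenvector of C. -/
/-!
Write `v j` for the columns of `X` and `b i j = v i ⬝ᵥ C v j`; the fixed-point equation says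
`C v j = ∑_{i ≤ j} b i j • v i`. By strong induction on `j`, each column is orthogonal to the
earlier ones and satisfies `C v j = b j j • v j`. For the step, a nonzero earlier column `v i` is a
unit vector (from `b i i = b i i * (v i ⬝ᵥ v i)` and `b i i > 0`), so dotting the equation for
`v j` with `v i` leaves `b j j * (v i ⬝ᵥ v j) = 0`, whence orthogonality as `b j j > 0` for
`v j ≠ 0`; then `b i j = b i i * (v i ⬝ᵥ v j) = 0` by symmetry of `C`, and only the diagonal term
of the equation remains.
-/

open Matrix

/-- The upper-triangular part operator `𝒰`: keeps entries on and above the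
diagonal, zeroes the rest. -/
def utri {m : ℕ} (A : Matrix (Fin m) (Fin m) ℝ) : Matrix (Fin m) (Fin m) ℝ :=
  Matrix.of fun i j => if i ≤ j then A i j else 0

section

variable {n ι K : Type*} [Fintype n]

theorem dotProduct_self_eq_one_of_mulVec_eq_smul [Field K] {C : Matrix n n K} {v : n → K}
    (hv : C *ᵥ v = (v ⬝ᵥ C *ᵥ v) • v) (hne : v ⬝ᵥ C *ᵥ v ≠ 0) : v ⬝ᵥ v = 1 := by
  have h : (v ⬝ᵥ C *ᵥ v) * (v ⬝ᵥ v) = (v ⬝ᵥ C *ᵥ v) * 1 := by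
    conv_rhs => rw [mul_one, hv, dotProduct_smul, smul_eq_mul]
  exact mul_left_cancel₀ hne h

theorem dotProduct_mulVec_eq_of_isSymm {C : Matrix n n ℝ} (hC : C.IsSymm) (v w : n → ℝ) :
    v ⬝ᵥ C *ᵥ w = C *ᵥ v ⬝ᵥ w := by
  rw [dotProduct_mulVec, ← vecMul_transpose, hC.eq]

theorem dotProduct_self_eq_one_of_posDef {C : Matrix n n ℝ} (hC : C.PosDef) {v : n → ℝ}
    (hv : C *ᵥ v = (v ⬝ᵥ C *ᵥ v) • v) (hne : v ≠ 0) : v ⬝ᵥ v = 1 :=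
  dotProduct_self_eq_one_of_mulVec_eq_smul hv (hC.dotProduct_mulVec_pos hne).ne'

variable [Fintype ι] [LinearOrder ι]

/-- Sanger's fixed-point equation `C X = X 𝒰(Xᵀ C X)`, written for the columns `v j` of `X`. -/
def IsSangerFixedPoint (C : Matrix n n ℝ) (v : ι → n → ℝ) : Prop :=
  ∀ j, C *ᵥ v j = ∑ i with i ≤ j, (v i ⬝ᵥ C *ᵥ v j) • v i

variable {C : Matrix n n ℝ} {v : ι → n → ℝ}

namespace IsSangerFixedPoint

theorem mulVec_eq_smul_of_orthogonal (hv : IsSangerFixedPoint C v) (hC : C.IsSymm) {j : ι}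
    (heig : ∀ i < j, C *ᵥ v i = (v i ⬝ᵥ C *ᵥ v i) • v i)
    (horth : ∀ i < j, v i ⬝ᵥ v j = 0) :
    C *ᵥ v j = (v j ⬝ᵥ C *ᵥ v j) • v j := by
  conv_lhs => rw [hv j]
  refine Finset.sum_eq_single_of_mem j (by simp) fun i hi hij ↦ ?_
  have hlt : i < j := lt_of_le_of_ne (Finset.mem_filter.mp hi).2 hij
  rw [dotProduct_mulVec_eq_of_isSymm hC, heig i hlt, smul_dotProduct, horth i hlt, smul_zero,
    zero_smul]

theorem orthogonal_of_lt (hv : IsSangerFixedPoint C v) (hC : C.PosDef) {j : ι}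
    (heig : ∀ i < j, C *ᵥ v i = (v i ⬝ᵥ C *ᵥ v i) • v i)
    (horth : ∀ k < j, ∀ i < k, v i ⬝ᵥ v k = 0) :
    ∀ i < j, v i ⬝ᵥ v j = 0 := by
  intro i hij
  by_cases hvi : v i = 0
  · simp [hvi]
  by_cases hvj : v j = 0
  · simp [hvj]
  have hunit : v i ⬝ᵥ v i = 1 := dotProduct_self_eq_one_of_posDef hC (heig i hij) hvi
  have horth_i : ∀ k < j, k ≠ i → v i ⬝ᵥ v k = 0 := fun k hkj hki ↦ by
    rcases lt_or_gt_of_ne hki with hki | hik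
    · rw [dotProduct_comm]; exact horth i hij k hki
    · exact horth k hkj i hik
  -- Only the terms `k = i` and `k = j` survive when dotting the fixed-point equation with `v i`.
  have hdot : v i ⬝ᵥ C *ᵥ v j = (v i ⬝ᵥ C *ᵥ v j) + (v j ⬝ᵥ C *ᵥ v j) * (v i ⬝ᵥ v j) := by
    conv_lhs => rw [hv j]
    rw [dotProduct_sum, ← Finset.add_sum_erase _ _ (by simp [hij.le] : i ∈ _),
      ← Finset.add_sum_erase _ _ (by simp [hij.ne'] : j ∈ _), Finset.sum_eq_zero]
    · simp only [dotProduct_smul, smul_eq_mul, hunit]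
      ring
    intro k hk
    simp only [Finset.mem_erase, Finset.mem_filter] at hk
    rw [dotProduct_smul, horth_i k (lt_of_le_of_ne hk.2.2.2 hk.1) hk.2.1, smul_zero]
  have hpos : 0 < v j ⬝ᵥ C *ᵥ v j := hC.dotProduct_mulVec_pos hvj
  exact (mul_eq_zero.mp (by linarith)).resolve_left hpos.ne'

theorem orthogonal_and_mulVec_eq_smul (hv : IsSangerFixedPoint C v) (hC : C.PosDef) (j : ι) :
    (∀ i < j, v i ⬝ᵥ v j = 0) ∧ C *ᵥ v j = (v j ⬝ᵥ C *ᵥ v j) • v j := by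
  induction j using WellFoundedLT.induction with
  | _ j ih =>
    have heig := fun i hi ↦ (ih i hi).2
    have horth := hv.orthogonal_of_lt hC heig fun k hk ↦ (ih k hk).1
    have hsymm : C.IsSymm := isHermitian_iff_isSymm.mp hC.isHermitian
    exact ⟨horth, hv.mulVec_eq_smul_of_orthogonal hsymm heig horth⟩

theorem pairwise_orthogonal (hv : IsSangerFixedPoint C v) (hC : C.PosDef) {i j : ι}
    (hij : i ≠ j) : v i ⬝ᵥ v j = 0 := by
  rcases lt_or_gt_of_ne hij with hij | hji
  · exact (hv.orthogonal_and_mulVec_eq_smul hC j).1 i hij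
  · rw [dotProduct_comm]; exact (hv.orthogonal_and_mulVec_eq_smul hC i).1 j hji

theorem dotProduct_self_eq_one (hv : IsSangerFixedPoint C v) (hC : C.PosDef) {j : ι}
    (hj : v j ≠ 0) : v j ⬝ᵥ v j = 1 :=
  dotProduct_self_eq_one_of_posDef hC (hv.orthogonal_and_mulVec_eq_smul hC j).2 hj

end IsSangerFixedPoint

end

theorem isSangerFixedPoint_of_mul_eq_mul_utri {d m : ℕ} {C : Matrix (Fin d) (Fin d) ℝ}
    {X : Matrix (Fin d) (Fin m) ℝ} (hfix : C * X = X * utri (Xᵀ * C * X)) :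
    IsSangerFixedPoint C Xᵀ := by
  intro j
  have hB : ∀ i, (Xᵀ * C * X) i j = Xᵀ i ⬝ᵥ C *ᵥ Xᵀ j := fun i ↦ by
    rw [Matrix.mul_assoc, mul_apply']
    rfl
  ext k
  refine (congrFun (congrFun hfix k) j).trans ?_
  rw [mul_apply]
  simp only [utri, of_apply, hB, Finset.sum_apply, Pi.smul_apply, smul_eq_mul,
    Finset.sum_filter, transpose_apply]
  exact Finset.sum_congr rfl fun i _ ↦ by split_ifs <;> ring

theorem sanger_fixed_point_characterization (d m : ℕ)
    (C : Matrix (Fin d) (Fin d) ℝ) (hC : C.PosDef)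
    (X : Matrix (Fin d) (Fin m) ℝ)
    (hfix : C * X = X * utri (Xᵀ * C * X)) :
    (∀ i j : Fin m, i ≠ j → (Xᵀ * X) i j = 0) ∧
    (∀ j : Fin m, (Xᵀ * X) j j = 0 ∨ (Xᵀ * X) j j = 1) ∧
    (∀ j : Fin m, (fun i => X i j) ≠ 0 →
      ((fun i => X i j) ⬝ᵥ (fun i => X i j) = 1 ∧
        ∃ l : ℝ, C.mulVec (fun i => X i j) = l • (fun i => X i j))) := by
  have hv := isSangerFixedPoint_of_mul_eq_mul_utri hfix
  refine ⟨fun i j hij ↦ hv.pairwise_orthogonal hC hij, fun j ↦ ?_, fun j hj ↦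
    ⟨hv.dotProduct_self_eq_one hC hj, _, (hv.orthogonal_and_mulVec_eq_smul hC j).2⟩⟩
  by_cases hj : Xᵀ j = 0
  · left
    simp [mul_apply', hj]
  · exact Or.inr (hv.dotProduct_self_eq_one hC hj)
end

section
/- Let λ₁ > λ₂ > ⋯ > λ_m > 0, D = diag(λ₁,…,λ_m), and let 𝒰 denote the upper-triangular-part operator on m×m matrices. If Z̃ ∈ ℝ^{m×m}, β ∈ ℝ, Z̃ ≠ 0, and DZ̃ − Z̃D − 𝒰(DZ̃ + Z̃ᵀD) = βZ̃, then β < 0. -/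
open Matrix

theorem sanger_top_block_eigenvalue_negative (m : ℕ) (lam : Fin m → ℝ)
    (hpos : ∀ i, 0 < lam i)
    (hstrict : ∀ i j : Fin m, i < j → lam j < lam i)
    (Z : Matrix (Fin m) (Fin m) ℝ) (β : ℝ) (hZ : Z ≠ 0)
    (heq :
      Matrix.diagonal lam * Z - Z * Matrix.diagonal lam -
        utri (Matrix.diagonal lam * Z + Zᵀ * Matrix.diagonal lam) = β • Z) :
    β < 0 := by
  by_contra hβ
  push_neg at hβ
  have key : ∀ i j : Fin m, lam i * Z i j - Z i j * lam j -
      (if i ≤ j then lam i * Z i j + Z j i * lam j else 0) = β * Z i j := by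
    intro i j
    have h := congrFun (congrFun heq i) j
    simpa [utri, Matrix.sub_apply, Matrix.add_apply, Matrix.diagonal_mul,
      Matrix.mul_diagonal, Matrix.smul_apply, Matrix.transpose_apply] using h
  have hlow : ∀ i j : Fin m, j < i → Z i j = 0 := by
    intro i j hij
    have h := key i j
    rw [if_neg (not_le.mpr hij)] at h
    have h2 : (lam i - lam j - β) * Z i j = 0 := by linear_combination h
    rcases mul_eq_zero.mp h2 with h3 | h3
    · have := hstrict j i hij
      linarith
    · exact h3
  have hdiag : ∀ i : Fin m, Z i i = 0 := by
    intro i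
    have h := key i i
    rw [if_pos le_rfl] at h
    have h2 : (β + 2 * lam i) * Z i i = 0 := by linear_combination -h
    rcases mul_eq_zero.mp h2 with h3 | h3
    · have := hpos i
      linarith
    · exact h3
  have hup : ∀ i j : Fin m, i < j → Z i j = 0 := by
    intro i j hij
    have h := key i j
    rw [if_pos hij.le, hlow j i hij] at h
    have h2 : (β + lam j) * Z i j = 0 := by linear_combination -h
    rcases mul_eq_zero.mp h2 with h3 | h3
    · have := hpos j
      linarith
    · exact h3
  apply hZ
  ext i j
  rcases lt_trichotomy i j with h | h | h
  · simpa using hup i j h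
  · simpa [h] using hdiag j
  · simpa using hlow i j h
end

section
/- Let D̂ = diag(λ₁,…,λ_d) with λ₁ > ⋯ > λ_m > λ_{m+1} ≥ ⋯ ≥ λ_d > 0, D = diag(λ₁,…,λ_m), A = [I_m; 0_{(d−m)×m}], and 𝒰 the upper-triangular-part operator on m×m matrices. Then every eigenvalue β of the linear map L: ℝ^{d×m} → ℝ^{d×m} given by L(W) = D̂W − WD − A·𝒰(DAᵀW + WᵀAD) is real and satisfies β < 0. -/
open Matrix

def utriC {m : ℕ} (A : Matrix (Fin m) (Fin m) ℂ) : Matrix (Fin m) (Fin m) ℂ :=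
  Matrix.of fun i j => if i ≤ j then A i j else 0

lemma Amul_apply {d m : ℕ} (M : Matrix (Fin m) (Fin m) ℂ) (i : Fin d) (j : Fin m) :
    ((Matrix.of fun i j => if (i : ℕ) = (j : ℕ) then (1:ℂ) else 0 : Matrix (Fin d) (Fin m) ℂ) * M) i j
      = if h : (i : ℕ) < m then M ⟨i, h⟩ j else 0 := by
  rw [Matrix.mul_apply]
  by_cases h : (i : ℕ) < m
  · rw [dif_pos h, Finset.sum_eq_single (⟨(i:ℕ), h⟩ : Fin m)]
    · simp
    · intro k _ hk
      have : (i : ℕ) ≠ (k : ℕ) := fun hik => hk (by apply Fin.ext; simp [← hik])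
      simp [this]
    · simp
  · rw [dif_neg h]
    apply Finset.sum_eq_zero
    intro k _
    have : (i : ℕ) ≠ (k : ℕ) := fun hik => h (hik ▸ k.isLt)
    simp [this]

lemma ATmul_apply {d m : ℕ} (hm : m ≤ d) (Z : Matrix (Fin d) (Fin m) ℂ) (k j : Fin m) :
    ((Matrix.of fun i j => if (i : ℕ) = (j : ℕ) then (1:ℂ) else 0 : Matrix (Fin d) (Fin m) ℂ)ᵀ * Z) k j
      = Z (Fin.castLE hm k) j := by
  rw [Matrix.mul_apply, Finset.sum_eq_single (Fin.castLE hm k)]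
  · simp [Fin.castLE]
  · intro b _ hb
    have : (b : ℕ) ≠ (k : ℕ) := fun hbk => hb (by apply Fin.ext; simpa [Fin.castLE] using hbk)
    simp [this]
  · simp

lemma mulA_apply {d m : ℕ} (hm : m ≤ d) (Z : Matrix (Fin d) (Fin m) ℂ) (k j : Fin m) :
    (Zᵀ * (Matrix.of fun i j => if (i : ℕ) = (j : ℕ) then (1:ℂ) else 0 : Matrix (Fin d) (Fin m) ℂ)) k j
      = Z (Fin.castLE hm j) k := by
  rw [Matrix.mul_apply, Finset.sum_eq_single (Fin.castLE hm j)]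
  · simp [Fin.castLE]
  · intro b _ hb
    have : (b : ℕ) ≠ (j : ℕ) := fun hbk => hb (by apply Fin.ext; simpa [Fin.castLE] using hbk)
    simp [this]
  · simp

lemma eig_eq {β : ℂ} {c : ℝ} {z : ℂ} (hz : z ≠ 0) (h : (c : ℂ) * z = β * z) : β = (c : ℂ) :=
  (mul_right_cancel₀ hz h.symm)

theorem sanger_linearization_eigenvalues_real_negative (d m : ℕ) (hm : m ≤ d)
    (lam : Fin d → ℝ)
    (hpos : ∀ i, 0 < lam i)
    (hanti : ∀ i j : Fin d, i ≤ j → lam j ≤ lam i)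
    (hstrict : ∀ i j : Fin d, i < j → (j : ℕ) ≤ m → lam j < lam i)
    (β : ℂ) (Z : Matrix (Fin d) (Fin m) ℂ) (hZ : Z ≠ 0)
    (heq :
      letI Dhat : Matrix (Fin d) (Fin d) ℂ :=
        Matrix.diagonal fun i => (lam i : ℂ)
      letI D : Matrix (Fin m) (Fin m) ℂ :=
        Matrix.diagonal fun j : Fin m => (lam ⟨j.val, by have := j.isLt; omega⟩ : ℂ)
      letI A : Matrix (Fin d) (Fin m) ℂ :=
        Matrix.of fun i j => if (i : ℕ) = (j : ℕ) then 1 else 0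
      Dhat * Z - Z * D - A * utriC (D * Aᵀ * Z + Zᵀ * A * D) = β • Z) :
    β.im = 0 ∧ β.re < 0 := by
  have heq' :
      (Matrix.diagonal fun i => (lam i : ℂ)) * Z -
        Z * (Matrix.diagonal fun j : Fin m => (lam (Fin.castLE hm j) : ℂ)) -
        (Matrix.of fun i j => if (i : ℕ) = (j : ℕ) then (1:ℂ) else 0 : Matrix (Fin d) (Fin m) ℂ) *
          utriC ((Matrix.diagonal fun j : Fin m => (lam (Fin.castLE hm j) : ℂ)) *
              (Matrix.of fun i j => if (i : ℕ) = (j : ℕ) then (1:ℂ) else 0 : Matrix (Fin d) (Fin m) ℂ)ᵀ * Z +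
            Zᵀ * (Matrix.of fun i j => if (i : ℕ) = (j : ℕ) then (1:ℂ) else 0 : Matrix (Fin d) (Fin m) ℂ) *
              (Matrix.diagonal fun j : Fin m => (lam (Fin.castLE hm j) : ℂ))) = β • Z := heq
  -- entrywise equation
  have key : ∀ (i : Fin d) (j : Fin m),
      (lam i : ℂ) * Z i j - Z i j * (lam (Fin.castLE hm j) : ℂ) -
        (if h : (i : ℕ) < m then
          (if (i : ℕ) ≤ (j : ℕ) then
            (lam i : ℂ) * Z i j +
              (lam (Fin.castLE hm j) : ℂ) * Z (Fin.castLE hm j) ⟨(i : ℕ), h⟩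
           else 0)
         else 0) = β * Z i j := by
    intro i j
    have h0 := congrFun (congrFun heq' i) j
    rw [Matrix.sub_apply, Matrix.sub_apply, Matrix.smul_apply, Matrix.diagonal_mul,
      Matrix.mul_diagonal, Amul_apply, smul_eq_mul] at h0
    rw [← h0]
    congr 1
    by_cases h : (i : ℕ) < m
    · rw [dif_pos h, dif_pos h]
      show _ = utriC _ ⟨(i:ℕ), h⟩ j
      rw [utriC, Matrix.of_apply, Matrix.add_apply, Matrix.mul_assoc, Matrix.diagonal_mul,
        ATmul_apply hm, Matrix.mul_diagonal, mulA_apply hm]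
      have hcast : Fin.castLE hm (⟨(i:ℕ), h⟩ : Fin m) = i := Fin.ext rfl
      rw [hcast]
      by_cases hij : (i : ℕ) ≤ (j : ℕ)
      · rw [if_pos hij, if_pos (show (⟨(i:ℕ), h⟩ : Fin m) ≤ j from hij)]
        ring
      · rw [if_neg hij, if_neg (show ¬ (⟨(i:ℕ), h⟩ : Fin m) ≤ j from hij)]
    · rw [dif_neg h, dif_neg h]
  -- find a nonzero entry
  obtain ⟨i, j, hij⟩ : ∃ i j, Z i j ≠ 0 := by
    by_contra hc
    push_neg at hc
    exact hZ (by ext i j; simpa using hc i j)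
  suffices hmain : ∃ c : ℝ, c < 0 ∧ β = (c : ℂ) by
    obtain ⟨c, hc, rfl⟩ := hmain
    exact ⟨Complex.ofReal_im c, by simpa using hc⟩
  rcases lt_trichotomy (i : ℕ) (j : ℕ) with hlt | heqn | hgt
  · -- strictly upper entry
    have him : (i : ℕ) < m := lt_trans hlt j.isLt
    set jd : Fin d := Fin.castLE hm j with hjd
    set im : Fin m := ⟨(i : ℕ), him⟩ with him'
    by_cases hw : Z jd im = 0
    · have hk := key i j
      rw [dif_pos him, if_pos (le_of_lt hlt)] at hk
      have hk2 : ((-(lam jd) : ℝ) : ℂ) * Z i j = β * Z i j := by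
        push_cast
        rw [← him'] at hk
        rw [hw] at hk
        linear_combination hk
      exact ⟨-(lam jd), neg_neg_iff_pos.mpr (hpos jd), (eig_eq hij hk2).symm ▸ rfl⟩
    · have hk := key jd im
      have hdite : (if h : (jd : ℕ) < m then
          (if (jd : ℕ) ≤ (im : ℕ) then
            (lam jd : ℂ) * Z jd im +
              (lam (Fin.castLE hm im) : ℂ) * Z (Fin.castLE hm im) ⟨(jd : ℕ), h⟩
           else 0)
         else 0) = 0 := by
        split
        · have hn : ¬ ((jd : ℕ) ≤ (im : ℕ)) := show ¬ ((j : ℕ) ≤ (i : ℕ)) by omega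
          rw [if_neg hn]
        · rfl
      rw [hdite] at hk
      have hci : Fin.castLE hm im = i := Fin.ext rfl
      rw [hci] at hk
      have hk2 : ((lam jd - lam i : ℝ) : ℂ) * Z jd im = β * Z jd im := by
        push_cast
        linear_combination hk
      refine ⟨lam jd - lam i, ?_, eig_eq hw hk2⟩
      have : lam jd < lam i := by
        apply hstrict i jd
        · exact (Fin.lt_def).mpr (show (i : ℕ) < (j : ℕ) from hlt)
        · exact le_of_lt j.isLt
      linarith
  · -- diagonal entry
    have him : (i : ℕ) < m := heqn ▸ j.isLt
    have hk := key i j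
    rw [dif_pos him, if_pos (le_of_eq heqn)] at hk
    have hci : Fin.castLE hm j = i := Fin.ext heqn.symm
    have hcj : (⟨(i : ℕ), him⟩ : Fin m) = j := Fin.ext heqn
    rw [hci, hcj] at hk
    have hk2 : ((-2 * lam i : ℝ) : ℂ) * Z i j = β * Z i j := by
      push_cast
      linear_combination hk
    refine ⟨-2 * lam i, by nlinarith [hpos i], eig_eq hij hk2⟩
  · -- strictly lower entry
    have hk := key i j
    have hdite : (if h : (i : ℕ) < m then
        (if (i : ℕ) ≤ (j : ℕ) then
          (lam i : ℂ) * Z i j +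
            (lam (Fin.castLE hm j) : ℂ) * Z (Fin.castLE hm j) ⟨(i : ℕ), h⟩
         else 0)
       else 0) = 0 := by
      split
      · rw [if_neg (by omega)]
      · rfl
    rw [hdite] at hk
    set jd : Fin d := Fin.castLE hm j with hjd
    have hk2 : ((lam i - lam jd : ℝ) : ℂ) * Z i j = β * Z i j := by
      push_cast
      linear_combination hk
    refine ⟨lam i - lam jd, ?_, eig_eq hij hk2⟩
    have : lam i < lam jd := by
      by_cases himle : (i : ℕ) ≤ m
      · apply hstrict jd i
        · exact (Fin.lt_def).mpr (show (j : ℕ) < (i : ℕ) from hgt)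
        · exact himle
      · have hmd : m < d := by omega
        calc lam i ≤ lam ⟨m, hmd⟩ := hanti ⟨m, hmd⟩ i ((Fin.le_def).mpr (show m ≤ (i : ℕ) by omega))
          _ < lam jd := by
            apply hstrict jd ⟨m, hmd⟩
            · exact (Fin.lt_def).mpr (show (j : ℕ) < m from j.isLt)
            · exact le_refl m
    linarith
end

section
/- Let C be a symmetric positive definite d×d real matrix with eigenvalues λ₁ > ⋯ > λ_m > λ_{m+1} ≥ ⋯ ≥ λ_d > 0, and let X* ∈ ℝ^{d×m} have orthonormal columns x*_i with Cx*_i = λ_i x*_i for i = 1,…,m. Define H(X) = X + η(CX − X·𝒰(XᵀCX)). Then X* is a fixed point of H, and there exists η* > 0 such that for 0 < η < η* the spectral radius of the derivative of H at X* is strictly less than 1. -/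
open Matrix

/-- Sanger's map `H(X) = X + η (C X − X 𝒰(Xᵀ C X))`. -/
noncomputable def sangerMap {d m : ℕ} (C : Matrix (Fin d) (Fin d) ℝ) (η : ℝ)
    (X : Matrix (Fin d) (Fin m) ℝ) : Matrix (Fin d) (Fin m) ℝ :=
  X + η • (C * X - X * utri (Xᵀ * C * X))

lemma utri_diagonal {m : ℕ} (v : Fin m → ℝ) : utri (Matrix.diagonal v) = Matrix.diagonal v := by
  ext i j
  by_cases h : i ≤ j
  · simp [utri, h]
  · have hne : i ≠ j := fun hh => h (hh ▸ le_refl i)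
    simp [utri, h, Matrix.diagonal_apply_ne _ hne]

lemma utriC_diagonal {m : ℕ} (v : Fin m → ℂ) : utriC (Matrix.diagonal v) = Matrix.diagonal v := by
  ext i j
  by_cases h : i ≤ j
  · simp [utriC, h]
  · have hne : i ≠ j := fun hh => h (hh ▸ le_refl i)
    simp [utriC, h, Matrix.diagonal_apply_ne _ hne]

lemma map_mul_ofReal {a b c : ℕ} (A : Matrix (Fin a) (Fin b) ℝ) (B : Matrix (Fin b) (Fin c) ℝ) :
    (A * B).map Complex.ofReal = A.map Complex.ofReal * B.map Complex.ofReal := by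
  ext i j
  simp [Matrix.mul_apply]

lemma small_step_abs (s η μ : ℝ) (hs0 : 0 ≤ s) (hη0 : 0 < η) (hη1 : η < 1 / (1 + 2 * s))
    (hμ0 : μ < 0) (hμb : -(2 * s) ≤ μ) : |1 + η * μ| < 1 := by
  have h1s : (0:ℝ) < 1 + 2 * s := by linarith
  have hub : η * (1 + 2 * s) < 1 := by rwa [lt_div_iff₀ h1s] at hη1
  have hlb : η * (-(2 * s)) ≤ η * μ := mul_le_mul_of_nonneg_left hμb hη0.le
  have hneg : η * μ < 0 := mul_neg_of_pos_of_neg hη0 hμ0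
  rw [abs_lt]
  constructor <;> nlinarith [hub, hlb, hneg, hη0, hs0]

theorem sanger_fixed_point_attractor (d m : ℕ) (hm : m ≤ d)
    (C : Matrix (Fin d) (Fin d) ℝ) (hC : C.PosDef)
    (lam : Fin d → ℝ)
    (hpos : ∀ i, 0 < lam i)
    (hanti : ∀ i j : Fin d, i ≤ j → lam j ≤ lam i)
    (hstrict : ∀ i j : Fin d, i < j → (j : ℕ) ≤ m → lam j < lam i)
    (Xhat : Matrix (Fin d) (Fin d) ℝ)
    (hortho : Xhatᵀ * Xhat = 1)
    (heig : C * Xhat = Xhat * Matrix.diagonal lam)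
    (Xstar : Matrix (Fin d) (Fin m) ℝ)
    (hXstar : Xstar = Xhat.submatrix id
      (fun j : Fin m => (⟨j.val, lt_of_lt_of_le j.isLt hm⟩ : Fin d))) :
    (∀ η : ℝ, sangerMap C η Xstar = Xstar) ∧
    ∃ ηs : ℝ, 0 < ηs ∧ ∀ η : ℝ, 0 < η → η < ηs →
      ∀ (β : ℂ) (Z : Matrix (Fin d) (Fin m) ℂ), Z ≠ 0 →
        (letI Cc := C.map Complex.ofReal
         letI Xc := Xstar.map Complex.ofReal
         Z + (η : ℂ) • (Cc * Z - Z * utriC (Xcᵀ * Cc * Xc)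
              - Xc * utriC (Zᵀ * Cc * Xc + Xcᵀ * Cc * Z)) = β • Z) →
        ‖β‖ < 1 := by
  set e : Fin m → Fin d := fun j => ⟨j.val, lt_of_lt_of_le j.isLt hm⟩ with he
  have he_inj : Function.Injective e := by
    intro a b h
    have h2 : (e a : ℕ) = (e b : ℕ) := congrArg Fin.val h
    exact Fin.ext h2
  set lam' : Fin m → ℝ := fun j => lam (e j) with hlam'
  have hXe : ∀ (i : Fin d) (j : Fin m), Xstar i j = Xhat i (e j) := by
    intro i j; rw [hXstar]; rfl
  have hCsym : Cᵀ = C := by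
    ext i j
    simpa using congrFun (congrFun hC.1 i) j
  -- real key lemmas
  have hCX : C * Xstar = Xstar * Matrix.diagonal lam' := by
    ext i j
    have h := congrFun (congrFun heig i) (e j)
    rw [Matrix.mul_diagonal] at h
    rw [Matrix.mul_diagonal]
    simp only [Matrix.mul_apply, hXe] at h ⊢
    exact h
  have hXX : Xstarᵀ * Xstar = 1 := by
    ext i j
    have h := congrFun (congrFun hortho (e i)) (e j)
    simp only [Matrix.mul_apply, Matrix.transpose_apply] at h ⊢
    simp only [hXe]
    rw [h]
    simp [Matrix.one_apply, he_inj.eq_iff]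
  have hXCX : Xstarᵀ * C * Xstar = Matrix.diagonal lam' := by
    rw [Matrix.mul_assoc, hCX, ← Matrix.mul_assoc, hXX, one_mul]
  constructor
  · intro η
    unfold sangerMap
    rw [hXCX, utri_diagonal, hCX, sub_self, smul_zero, add_zero]
  -- attractor part
  have hs0 : (0:ℝ) ≤ ∑ i, lam i := Finset.sum_nonneg fun i _ => (hpos i).le
  set s : ℝ := ∑ i, lam i with hs
  have h1s : (0:ℝ) < 1 + 2 * s := by linarith
  have hle_s : ∀ k : Fin d, lam k ≤ s := fun k =>
    Finset.single_le_sum (fun i _ => (hpos i).le) (Finset.mem_univ k)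
  refine ⟨1 / (1 + 2 * s), by positivity, ?_⟩
  intro η hη0 hη1 β Z hZ0 hZeq
  -- eigenvalue ordering helper
  have hstrictlt : ∀ (a : Fin d) (b : Fin m), (b : ℕ) < (a : ℕ) → lam a < lam' b := by
    intro a b h
    by_cases ham : (a : ℕ) ≤ m
    · exact hstrict (e b) a h ham
    · push_neg at ham
      have hmd : m < d := lt_trans ham a.isLt
      have h1 : lam a ≤ lam ⟨m, hmd⟩ := hanti ⟨m, hmd⟩ a ham.le
      have h2 : lam ⟨m, hmd⟩ < lam' b := hstrict (e b) ⟨m, hmd⟩ b.isLt (le_refl m)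
      linarith
  -- complex setup
  set Cc : Matrix (Fin d) (Fin d) ℂ := C.map Complex.ofReal with hCc
  set Xc : Matrix (Fin d) (Fin m) ℂ := Xstar.map Complex.ofReal with hXc
  set Xhc : Matrix (Fin d) (Fin d) ℂ := Xhat.map Complex.ofReal with hXhc
  set DC : Matrix (Fin d) (Fin d) ℂ := Matrix.diagonal (fun i => (lam i : ℂ)) with hDC
  set LC : Matrix (Fin m) (Fin m) ℂ := Matrix.diagonal (fun j => (lam' j : ℂ)) with hLC
  have hZ : Z + (η : ℂ) • (Cc * Z - Z * utriC (Xcᵀ * Cc * Xc)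
      - Xc * utriC (Zᵀ * Cc * Xc + Xcᵀ * Cc * Z)) = β • Z := hZeq
  clear hZeq
  have hoc : Xhcᵀ * Xhc = 1 := by
    rw [hXhc, ← Matrix.transpose_map, ← map_mul_ofReal, hortho]
    simp [Matrix.map_one Complex.ofReal Complex.ofReal_zero Complex.ofReal_one]
  have hfull : Xhc * Xhcᵀ = 1 := mul_eq_one_comm.mp hoc
  have hCcsym : Ccᵀ = Cc := by
    rw [hCc, ← Matrix.transpose_map, hCsym]
  have hCXc : Cc * Xhc = Xhc * DC := by
    rw [hCc, hXhc, ← map_mul_ofReal, heig, map_mul_ofReal, hDC,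
      Matrix.diagonal_map Complex.ofReal_zero]
  have hCXcs : Cc * Xc = Xc * LC := by
    rw [hCc, hXc, ← map_mul_ofReal, hCX, map_mul_ofReal, hLC,
      Matrix.diagonal_map Complex.ofReal_zero]
  have hXcXc : Xcᵀ * Xc = 1 := by
    rw [hXc, ← Matrix.transpose_map, ← map_mul_ofReal, hXX]
    simp [Matrix.map_one Complex.ofReal Complex.ofReal_zero Complex.ofReal_one]
  have hXhcC : Xhcᵀ * Cc = DC * Xhcᵀ := by
    have h := congrArg Matrix.transpose hCXc
    rw [Matrix.transpose_mul, Matrix.transpose_mul, Matrix.diagonal_transpose, hCcsym] at h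
    exact h
  have hXcC : Xcᵀ * Cc = LC * Xcᵀ := by
    have h := congrArg Matrix.transpose hCXcs
    rw [Matrix.transpose_mul, Matrix.transpose_mul, Matrix.diagonal_transpose, hCcsym] at h
    exact h
  set P : Matrix (Fin d) (Fin m) ℂ := Xhcᵀ * Z with hPdef
  have hPZ : Xhc * P = Z := by
    rw [hPdef, ← Matrix.mul_assoc, hfull, Matrix.one_mul]
  have hP0 : P ≠ 0 := by
    intro h
    exact hZ0 (by rw [← hPZ, h, Matrix.mul_zero])
  have hXcZ : Xcᵀ * Z = P.submatrix e id := by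
    rw [← hPZ, ← Matrix.mul_assoc]
    have hS' : Xcᵀ * Xhc = Matrix.of (fun (i : Fin m) (k : Fin d) => if e i = k then 1 else 0) := by
      ext i k
      have h := congrFun (congrFun hoc (e i)) k
      simp only [Matrix.mul_apply, Matrix.transpose_apply] at h ⊢
      have : ∀ t, Xc t i = Xhc t (e i) := by
        intro t
        rw [hXc, hXhc]
        simp [Matrix.map_apply, hXe]
      simp only [this]
      rw [h]
      simp [Matrix.one_apply]
    rw [hS']
    ext i j
    simp [Matrix.mul_apply]
  set M : Matrix (Fin m) (Fin m) ℂ := LC * P.submatrix e id with hMdef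
  have hM : Xcᵀ * Cc * Z = M := by
    rw [hXcC, Matrix.mul_assoc, hXcZ, hMdef]
  have hZCX : Zᵀ * Cc * Xc = Mᵀ := by
    have h : (Zᵀ * Cc * Xc)ᵀ = Xcᵀ * Cc * Z := by
      rw [Matrix.transpose_mul, Matrix.transpose_mul, Matrix.transpose_transpose, hCcsym,
        Matrix.mul_assoc]
    rw [← Matrix.transpose_transpose (Zᵀ * Cc * Xc), h, hM]
  have hU1 : utriC (Xcᵀ * Cc * Xc) = LC := by
    rw [Matrix.mul_assoc, hCXcs, ← Matrix.mul_assoc, hXcXc, one_mul, hLC, utriC_diagonal]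
  set U₂ : Matrix (Fin m) (Fin m) ℂ := utriC (Mᵀ + M) with hU₂def
  set Sc : Matrix (Fin d) (Fin m) ℂ := Matrix.of (fun (i : Fin d) (k : Fin m) => if i = e k then 1 else 0) with hScdef
  have hS : Xhcᵀ * Xc = Sc := by
    ext i k
    have h := congrFun (congrFun hoc i) (e k)
    simp only [Matrix.mul_apply, Matrix.transpose_apply] at h ⊢
    have : ∀ t, Xc t k = Xhc t (e k) := by
      intro t
      rw [hXc, hXhc]
      simp [Matrix.map_apply, hXe]
    simp only [this]
    rw [h]
    simp [Matrix.one_apply, hScdef]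
  -- coordinate equation
  have Peq : P + (η : ℂ) • (DC * P - P * LC - Sc * U₂) = β • P := by
    have h := congrArg (fun W => Xhcᵀ * W) hZ
    simp only [Matrix.mul_add, Matrix.mul_smul, Matrix.mul_sub] at h
    rw [hU1, hM, hZCX] at h
    rw [← Matrix.mul_assoc Xhcᵀ Cc Z, hXhcC, Matrix.mul_assoc DC Xhcᵀ Z] at h
    rw [← Matrix.mul_assoc Xhcᵀ Z LC] at h
    rw [← Matrix.mul_assoc Xhcᵀ Xc U₂, hS] at h
    exact h
  have hEnt : ∀ (i : Fin d) (j : Fin m),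
      P i j + (η:ℂ) * ((lam i : ℂ) * P i j - P i j * (lam' j : ℂ) - (Sc * U₂) i j) = β * P i j := by
    intro i j
    have h := congrFun (congrFun Peq i) j
    simpa [Matrix.add_apply, Matrix.sub_apply, Matrix.smul_apply, Matrix.diagonal_mul,
      Matrix.mul_diagonal, smul_eq_mul, hDC, hLC] using h
  have hU2 : ∀ (k j : Fin m), U₂ k j =
      if k ≤ j then (lam' j : ℂ) * P (e j) k + (lam' k : ℂ) * P (e k) j else 0 := by
    intro k j
    have hMent : ∀ a b : Fin m, M a b = (lam' a : ℂ) * P (e a) b := by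
      intro a b
      rw [hMdef, hLC]
      simp [Matrix.diagonal_mul]
    rw [hU₂def]
    simp only [utriC, Matrix.of_apply, Matrix.add_apply, Matrix.transpose_apply, hMent]
  have hSU : ∀ (i : Fin d) (j : Fin m),
      (Sc * U₂) i j = if h : (i : ℕ) < m then U₂ ⟨(i:ℕ), h⟩ j else 0 := by
    intro i j
    by_cases h : (i : ℕ) < m
    · rw [dif_pos h, Matrix.mul_apply, Finset.sum_eq_single (⟨(i:ℕ), h⟩ : Fin m)]
      · have : i = e ⟨(i:ℕ), h⟩ := Fin.ext rfl
        simp [hScdef, ← this]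
      · intro b _ hb
        have : i ≠ e b := by
          intro heq
          exact hb (Fin.ext (congrArg Fin.val heq).symm)
        simp [hScdef, this]
      · simp
    · rw [dif_neg h, Matrix.mul_apply]
      apply Finset.sum_eq_zero
      intro k _
      have : i ≠ e k := by
        intro heq
        exact h ((congrArg Fin.val heq) ▸ k.isLt)
      simp [hScdef, this]
  -- main case analysis: extract the eigenvalue
  have hfin : ∃ μ : ℝ, μ < 0 ∧ -(2 * s) ≤ μ ∧ β = ((1 + η * μ : ℝ) : ℂ) := by
    by_cases hA : ∃ i : Fin d, ∃ j : Fin m, (j : ℕ) ≤ (i : ℕ) ∧ P i j ≠ 0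
    · obtain ⟨i, j, hji, hp⟩ := hA
      rcases lt_or_eq_of_le hji with hlt | heqv
      · -- strictly lower entry: β = 1 + η (λ_i − λ'_j)
        refine ⟨lam i - lam' j, ?_, ?_, ?_⟩
        · have := hstrictlt i j hlt
          linarith
        · have h1 : lam' j ≤ s := hle_s (e j)
          have h2 : 0 < lam i := hpos i
          linarith
        · have hG : (Sc * U₂) i j = 0 := by
            rw [hSU]
            split_ifs with h
            · rw [hU2]
              have hnc : ¬ ((⟨(i:ℕ), h⟩ : Fin m) ≤ j) := by
                intro hle
                have h2 : (i : ℕ) ≤ (j : ℕ) := hle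
                omega
              rw [if_neg hnc]
            · rfl
          have h := hEnt i j
          rw [hG] at h
          have hc : (((1 + η * (lam i - lam' j) : ℝ)) : ℂ) * P i j = β * P i j := by
            push_cast
            linear_combination h
          exact (mul_right_cancel₀ hp hc).symm
      · -- diagonal entry: β = 1 − 2 η λ'_j
        have him : (i : ℕ) < m := heqv ▸ j.isLt
        have hie : i = e j := Fin.ext heqv.symm
        have hli : lam i = lam' j := by rw [hie]
        refine ⟨-(2 * lam' j), ?_, ?_, ?_⟩
        · have h0 := hpos (e j)
          have hh : lam' j = lam (e j) := rfl
          linarith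
        · have h1 : lam' j ≤ s := hle_s (e j)
          linarith
        · have hG : (Sc * U₂) i j = 2 * (lam' j : ℂ) * P i j := by
            rw [hSU, dif_pos him]
            have hjj : (⟨(i:ℕ), him⟩ : Fin m) = j := Fin.ext heqv.symm
            rw [hjj, hU2, if_pos (le_refl j), ← hie]
            ring
          have h := hEnt i j
          rw [hG] at h
          have hlic : (lam i : ℂ) = (lam' j : ℂ) := by rw [hli]
          rw [hlic] at h
          have hc : (((1 + η * (-(2 * lam' j)) : ℝ)) : ℂ) * P i j = β * P i j := by
            push_cast
            linear_combination h
          exact (mul_right_cancel₀ hp hc).symm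
    · -- all lower entries vanish
      push_neg at hA
      have hex : ∃ i : Fin d, ∃ j : Fin m, P i j ≠ 0 := by
        by_contra h
        push_neg at h
        exact hP0 (by ext i j; simpa using h i j)
      obtain ⟨i, j, hp⟩ := hex
      have hij : (i : ℕ) < (j : ℕ) := by
        by_contra h
        push_neg at h
        exact hp (hA i j h)
      have him : (i : ℕ) < m := lt_trans hij j.isLt
      refine ⟨-(lam' j), ?_, ?_, ?_⟩
      · have h0 := hpos (e j)
        have hh : lam' j = lam (e j) := rfl
        linarith
      · have h1 : lam' j ≤ s := hle_s (e j)
        linarith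
      · have hG : (Sc * U₂) i j = (lam i : ℂ) * P i j := by
          have hle : (⟨(i:ℕ), him⟩ : Fin m) ≤ j := by
            rw [Fin.le_def]
            exact hij.le
          rw [hSU, dif_pos him, hU2, if_pos hle]
          have hz : P (e j) ⟨(i:ℕ), him⟩ = 0 := hA (e j) ⟨(i:ℕ), him⟩ hij.le
          have hei : e (⟨(i:ℕ), him⟩ : Fin m) = i := Fin.ext rfl
          have hlam'' : lam' (⟨(i:ℕ), him⟩ : Fin m) = lam i := rfl
          rw [hz, hei, hlam'']
          ring
        have h := hEnt i j
        rw [hG] at h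
        have hc : (((1 + η * (-(lam' j)) : ℝ)) : ℂ) * P i j = β * P i j := by
          push_cast
          linear_combination h
        exact (mul_right_cancel₀ hp hc).symm
  obtain ⟨μ, hμ0, hμb, hβ⟩ := hfin
  rw [hβ, Complex.norm_real, Real.norm_eq_abs]
  exact small_step_abs s η μ hs0 hη0 hη1 hμ0 hμb
end

section
/- Let r: ℝ × ℝ^d × Θ → (0, 1] be the mixture responsibility function, Θ = ℝ^d × (0,1) × (0,∞). For every multi-index α in the parameters (μ₁,…,μ_d, p, σ²) and every compact K ⊂ Θ, there exists a polynomial P in d+1 variables such that |∂^α r(y, h, θ)| ≤ P(|y|, |h₁|, …, |h_d|) for all θ ∈ K, y ∈ ℝ, h ∈ ℝ^d. -/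
open Matrix

/-- The Gaussian density `N(y | m, s)` with mean `m` and variance `s`. -/
noncomputable def gaussPdf (y m s : ℝ) : ℝ :=
  (Real.sqrt (2 * Real.pi * s))⁻¹ * Real.exp (-((y - m) ^ 2) / (2 * s))

/-- The EM responsibility function for the two-component mixture, as a function
of the parameter `θ = (μ, p, σ²)`. -/
noncomputable def respθ {d : ℕ} (y : ℝ) (h : Fin d → ℝ)
    (θ : (Fin d → ℝ) × ℝ × ℝ) : ℝ :=
  θ.2.1 * gaussPdf y (h ⬝ᵥ θ.1) θ.2.2 /
    (θ.2.1 * gaussPdf y (h ⬝ᵥ θ.1) θ.2.2 + (1 - θ.2.1) * gaussPdf y 0 θ.2.2)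

/-!
On the parameter set the responsibility is the logistic sigmoid of the log-odds
`L = logit p + (y (h ⬝ μ) - (h ⬝ μ)² / 2) / σ²`, and `L` is a linear combination of functions
of `θ` that are smooth on the parameter set, with coefficients `1`, `y hᵢ`, `hᵢ hⱼ`. The
derivatives of the sigmoid are polynomials in the sigmoid, which takes values in `(0, 1)`, so
they are bounded; on the compact `K` the derivatives of `L` are bounded by
`C (1 + |y| + ∑ |hᵢ|)²`. The Faà di Bruno bound for `sigmoid ∘ L` then gives
`‖Dⁿ r‖ ≤ n! C_σ (C (1 + |y| + ∑ |hᵢ|)²)ⁿ`.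
-/

open Real Nat

namespace Real

theorem exists_iteratedDeriv_sigmoid_eq_eval (i : ℕ) :
    ∃ Q : Polynomial ℝ, iteratedDeriv i sigmoid = fun z => Q.eval (sigmoid z) := by
  induction i with
  | zero => exact ⟨.X, by simp⟩
  | succ i ih =>
    obtain ⟨Q, hQ⟩ := ih
    refine ⟨Q.derivative * (.X * (1 - .X)), funext fun z => ?_⟩
    rw [iteratedDeriv_succ, hQ]
    exact ((Q.hasDerivAt _).comp z (hasDerivAt_sigmoid z)).deriv.trans (by simp)

theorem exists_bound_norm_iteratedFDeriv_sigmoid (n : ℕ) :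
    ∃ C, ∀ i ≤ n, ∀ z, ‖iteratedFDeriv ℝ i sigmoid z‖ ≤ C := by
  have bound (i : ℕ) : ∃ M, ∀ z, ‖iteratedDeriv i sigmoid z‖ ≤ M := by
    obtain ⟨Q, hQ⟩ := exists_iteratedDeriv_sigmoid_eq_eval i
    obtain ⟨M, hM⟩ := isCompact_Icc.exists_bound_of_continuousOn Q.continuous.continuousOn
    exact ⟨M, fun z => hQ ▸ hM _ ⟨sigmoid_nonneg z, sigmoid_le_one z⟩⟩
  choose M hM using bound
  obtain ⟨C, hC⟩ := ((Set.finite_Iic n).image M).bddAbove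
  refine ⟨C, fun i hi z => ?_⟩
  rw [norm_iteratedFDeriv_eq_norm_iteratedDeriv]
  exact (hM i z).trans (hC ⟨i, hi, rfl⟩)

end Real

section IteratedFDerivWithin

variable {𝕜 E F : Type*} [NontriviallyNormedField 𝕜] [NormedAddCommGroup E] [NormedSpace 𝕜 E]
  [NormedAddCommGroup F] [NormedSpace 𝕜 F]

theorem IsCompact.exists_bound_norm_iteratedFDerivWithin {ι : Type*} [Finite ι]
    {f : ι → E → F} {s K : Set E} {n : ℕ} (hK : IsCompact K) (hKs : K ⊆ s)
    (hf : ∀ k, ContDiffOn 𝕜 n (f k) s) (hs : UniqueDiffOn 𝕜 s) :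
    ∃ C, ∀ k, ∀ i ≤ n, ∀ x ∈ K, ‖iteratedFDerivWithin 𝕜 i (f k) s x‖ ≤ C := by
  have bound (p : ι × Fin (n + 1)) :
      ∃ M, ∀ x ∈ K, ‖iteratedFDerivWithin 𝕜 p.2 (f p.1) s x‖ ≤ M :=
    hK.exists_bound_of_continuousOn
      (((hf p.1).continuousOn_iteratedFDerivWithin (by exact_mod_cast p.2.is_le) hs).mono hKs)
  choose M hM using bound
  obtain ⟨C, hC⟩ := Finite.bddAbove_range M
  exact ⟨C, fun k i hi x hx => (hM (k, ⟨i, Nat.lt_succ_of_le hi⟩) x hx).trans (hC ⟨_, rfl⟩)⟩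

theorem norm_iteratedFDerivWithin_sum_smul_le {ι : Type*} (u : Finset ι) (c : ι → 𝕜)
    {f : ι → E → F} {s : Set E} {x : E} {i : ℕ} (hf : ∀ k ∈ u, ContDiffWithinAt 𝕜 i (f k) s x)
    (hs : UniqueDiffOn 𝕜 s) (hx : x ∈ s) :
    ‖iteratedFDerivWithin 𝕜 i (fun x => ∑ k ∈ u, c k • f k x) s x‖ ≤
      ∑ k ∈ u, ‖c k‖ * ‖iteratedFDerivWithin 𝕜 i (f k) s x‖ := by
  have hsum : (fun x => ∑ k ∈ u, c k • f k x) = ∑ k ∈ u, c k • f k := by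
    ext; simp
  rw [hsum, iteratedFDerivWithin_sum_apply (f := fun k => c k • f k) hs hx fun k hk =>
    (hf k hk).const_smul (c k)]
  refine (norm_sum_le _ _).trans (Finset.sum_le_sum fun k hk => ?_)
  rw [iteratedFDerivWithin_const_smul_apply (hf k hk) hs hx, norm_smul]

end IteratedFDerivWithin

def mixtureParams (d : ℕ) : Set ((Fin d → ℝ) × ℝ × ℝ) :=
  {θ | 0 < θ.2.1 ∧ θ.2.1 < 1 ∧ 0 < θ.2.2}

theorem isOpen_mixtureParams (d : ℕ) : IsOpen (mixtureParams d) :=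
  show IsOpen ({θ : (Fin d → ℝ) × ℝ × ℝ | 0 < θ.2.1} ∩ ({θ | θ.2.1 < 1} ∩ {θ | 0 < θ.2.2})) from
  (isOpen_lt continuous_const (by fun_prop)).inter
    ((isOpen_lt (by fun_prop) continuous_const).inter (isOpen_lt continuous_const (by fun_prop)))

theorem gaussPdf_zero_eq (y m s : ℝ) (hs : s ≠ 0) :
    gaussPdf y 0 s = exp (-(y * m - m ^ 2 / 2) / s) * gaussPdf y m s := by
  unfold gaussPdf
  rw [mul_left_comm, ← exp_add]
  congr 2
  field_simp
  ring

noncomputable def logOdds {d : ℕ} (y : ℝ) (h : Fin d → ℝ) (θ : (Fin d → ℝ) × ℝ × ℝ) : ℝ :=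
  log θ.2.1 - log (1 - θ.2.1) + (y * (h ⬝ᵥ θ.1) - (h ⬝ᵥ θ.1) ^ 2 / 2) / θ.2.2

theorem respθ_eq_sigmoid_logOdds {d : ℕ} (y : ℝ) (h : Fin d → ℝ) {θ : (Fin d → ℝ) × ℝ × ℝ}
    (hθ : θ ∈ mixtureParams d) : respθ y h θ = sigmoid (logOdds y h θ) := by
  obtain ⟨hp, hp1, hs⟩ := hθ
  have hA : 0 < gaussPdf y (h ⬝ᵥ θ.1) θ.2.2 := by unfold gaussPdf; positivity
  have hexp : exp (-logOdds y h θ) = (1 - θ.2.1) / θ.2.1 *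
      exp (-(y * (h ⬝ᵥ θ.1) - (h ⬝ᵥ θ.1) ^ 2 / 2) / θ.2.2) := by
    rw [logOdds, show ∀ a b c : ℝ, -(a - b + c) = b - a + -c by intros; ring, exp_add, exp_sub,
      exp_log hp, exp_log (by linarith), neg_div]
  rw [respθ, gaussPdf_zero_eq y (h ⬝ᵥ θ.1) _ hs.ne', sigmoid_def, hexp]
  generalize gaussPdf y (h ⬝ᵥ θ.1) θ.2.2 = A at hA ⊢
  field_simp

noncomputable def logOddsTerm (d : ℕ) : Unit ⊕ Fin d ⊕ Fin d × Fin d → (Fin d → ℝ) × ℝ × ℝ → ℝ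
  | .inl _, θ => log θ.2.1 - log (1 - θ.2.1)
  | .inr (.inl i), θ => θ.1 i / θ.2.2
  | .inr (.inr (i, j)), θ => -(θ.1 i * θ.1 j) / (2 * θ.2.2)

def logOddsCoeff {d : ℕ} (y : ℝ) (h : Fin d → ℝ) : Unit ⊕ Fin d ⊕ Fin d × Fin d → ℝ
  | .inl _ => 1
  | .inr (.inl i) => y * h i
  | .inr (.inr (i, j)) => h i * h j

theorem logOdds_eq_sum {d : ℕ} (y : ℝ) (h : Fin d → ℝ) :
    logOdds y h = fun θ => ∑ k, logOddsCoeff y h k • logOddsTerm d k θ := by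
  funext θ
  have hlin : ∑ i, y * h i * (θ.1 i / θ.2.2) = y * (h ⬝ᵥ θ.1) / θ.2.2 := by
    simp only [dotProduct, Finset.mul_sum, Finset.sum_div]
    exact Finset.sum_congr rfl fun i _ => by ring
  have hquad : ∑ i, ∑ j, h i * h j * (-(θ.1 i * θ.1 j) / (2 * θ.2.2)) =
      -((h ⬝ᵥ θ.1) ^ 2 / (2 * θ.2.2)) := by
    simp only [sq, dotProduct, Finset.sum_mul_sum, Finset.sum_div, ← Finset.sum_neg_distrib]
    exact Finset.sum_congr rfl fun i _ => Finset.sum_congr rfl fun j _ => by ring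
  simp only [logOdds, Fintype.sum_sum_type, Fintype.sum_prod_type, logOddsCoeff, logOddsTerm,
    smul_eq_mul, Finset.univ_unique, Finset.sum_singleton, hlin, hquad]
  ring

theorem sum_abs_logOddsCoeff_le {d : ℕ} (y : ℝ) (h : Fin d → ℝ) :
    ∑ k, |logOddsCoeff y h k| ≤ (1 + |y| + ∑ i, |h i|) ^ 2 := by
  simp only [Fintype.sum_sum_type, Fintype.sum_prod_type, logOddsCoeff, abs_mul, abs_one,
    Finset.univ_unique, Finset.sum_singleton, ← Finset.mul_sum, ← Finset.sum_mul]
  have := abs_nonneg y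
  have : 0 ≤ ∑ i, |h i| := Finset.sum_nonneg fun i _ => abs_nonneg (h i)
  nlinarith

theorem contDiffOn_logOddsTerm {d : ℕ} {m : WithTop ℕ∞} (k : Unit ⊕ Fin d ⊕ Fin d × Fin d) :
    ContDiffOn ℝ m (logOddsTerm d k) (mixtureParams d) := by
  intro θ ⟨hp, hp1, hs⟩
  apply ContDiffAt.contDiffWithinAt
  have hp' : ContDiffAt ℝ m (fun θ : (Fin d → ℝ) × ℝ × ℝ => θ.2.1) θ := by fun_prop
  rcases k with _ | i | ⟨i, j⟩
  · exact (hp'.log hp.ne').sub ((contDiffAt_const.sub hp').log (by linarith))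
  · exact ContDiffAt.div (by fun_prop) (by fun_prop) hs.ne'
  · exact ContDiffAt.div (by fun_prop) (by fun_prop) (by positivity)

theorem contDiffOn_logOdds {d : ℕ} {m : WithTop ℕ∞} (y : ℝ) (h : Fin d → ℝ) :
    ContDiffOn ℝ m (logOdds y h) (mixtureParams d) := by
  rw [logOdds_eq_sum]
  exact ContDiffOn.sum fun k _ => (contDiffOn_logOddsTerm k).const_smul _

theorem exists_norm_iteratedFDerivWithin_logOdds_le {d : ℕ} (n : ℕ)
    {K : Set ((Fin d → ℝ) × ℝ × ℝ)} (hK : IsCompact K) (hKU : K ⊆ mixtureParams d) :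
    ∃ C, ∀ (y : ℝ) (h : Fin d → ℝ), ∀ i ≤ n, ∀ θ ∈ K,
      ‖iteratedFDerivWithin ℝ i (logOdds y h) (mixtureParams d) θ‖ ≤
        C * (1 + |y| + ∑ j, |h j|) ^ 2 := by
  obtain ⟨C, hC⟩ := hK.exists_bound_norm_iteratedFDerivWithin hKU
    (fun k => contDiffOn_logOddsTerm (m := n) k) (isOpen_mixtureParams d).uniqueDiffOn
  refine ⟨C, fun y h i hi θ hθ => ?_⟩
  have hC0 : 0 ≤ C := (norm_nonneg _).trans (hC (.inl ()) i hi θ hθ)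
  rw [logOdds_eq_sum]
  calc _ ≤ ∑ k, ‖logOddsCoeff y h k‖ *
          ‖iteratedFDerivWithin ℝ i (logOddsTerm d k) (mixtureParams d) θ‖ :=
        norm_iteratedFDerivWithin_sum_smul_le _ _
          (fun k _ => (contDiffOn_logOddsTerm k).contDiffWithinAt (hKU hθ))
          (isOpen_mixtureParams d).uniqueDiffOn (hKU hθ)
    _ ≤ ∑ k, |logOddsCoeff y h k| * C :=
        Finset.sum_le_sum fun k _ => mul_le_mul_of_nonneg_left (hC k i hi θ hθ) (norm_nonneg _)
    _ ≤ C * (1 + |y| + ∑ j, |h j|) ^ 2 := by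
        rw [← Finset.sum_mul, mul_comm]
        exact mul_le_mul_of_nonneg_left (sum_abs_logOddsCoeff_le y h) hC0

theorem resp_derivatives_polynomial_bound (d : ℕ) (n : ℕ)
    (K : Set ((Fin d → ℝ) × ℝ × ℝ)) (hK : IsCompact K)
    (hKsub : K ⊆ {θ | 0 < θ.2.1 ∧ θ.2.1 < 1 ∧ 0 < θ.2.2}) :
    ∃ P : MvPolynomial (Fin (d + 1)) ℝ,
      ∀ θ ∈ K, ∀ (y : ℝ) (h : Fin d → ℝ),
        ‖iteratedFDeriv ℝ n (respθ y h) θ‖ ≤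
          MvPolynomial.eval (Fin.cons |y| fun i => |h i|) P := by
  obtain ⟨Cσ, hCσ⟩ := exists_bound_norm_iteratedFDeriv_sigmoid n
  obtain ⟨C, hC⟩ := exists_norm_iteratedFDerivWithin_logOdds_le n hK hKsub
  let S : MvPolynomial (Fin (d + 1)) ℝ := 1 + .X 0 + ∑ i : Fin d, .X i.succ
  refine ⟨.C (n ! * Cσ * max C 1 ^ n) * S ^ (2 * n), fun θ hθ y h => ?_⟩
  have hU := isOpen_mixtureParams d
  have hθU : θ ∈ mixtureParams d := hKsub hθ
  have hS : 1 ≤ 1 + |y| + ∑ i, |h i| := by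
    have := Finset.sum_nonneg fun i (_ : i ∈ Finset.univ) => abs_nonneg (h i)
    linarith [abs_nonneg y]
  set D := max C 1 * (1 + |y| + ∑ i, |h i|) ^ 2
  have hD : 1 ≤ D := one_le_mul_of_one_le_of_one_le (le_max_right _ _) (one_le_pow₀ hS)
  rw [← iteratedFDerivWithin_of_isOpen n hU hθU,
    iteratedFDerivWithin_congr (fun _ hθ' => respθ_eq_sigmoid_logOdds y h hθ') hθU]
  calc _ ≤ n ! * Cσ * D ^ n :=
        norm_iteratedFDerivWithin_comp_le (t := Set.univ)
          (contDiff_sigmoid.of_le le_top).contDiffOn (contDiffOn_logOdds y h) le_rfl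
          uniqueDiffOn_univ hU.uniqueDiffOn (Set.mapsTo_univ _ _) hθU
          (fun i hi => by simpa only [iteratedFDerivWithin_univ] using hCσ i hi _)
          (fun i hi1 hi => ((hC y h i hi θ hθ).trans
            (mul_le_mul_of_nonneg_right (le_max_left _ _) (by positivity))).trans
            (le_self_pow₀ hD (by omega)))
    _ = _ := by
        simp only [S, D, map_mul, map_pow, map_add, map_one, map_sum, MvPolynomial.eval_C,
          MvPolynomial.eval_X, Fin.cons_zero, Fin.cons_succ]
        rw [mul_pow, pow_mul]
        ring
end
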